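/- arXiv:2208.14758 — 2 statements merged into one kernel-verified Lean document; each statement's English description precedes it below -/
import Mathlib

section
/- Let Γ be a countable LERF group, i.e. every finitely generated subgroup of Γ is an intersection of finite index subgroups. Then Boom(Γ) is residual (comeagre) in Sub(Γ): it contains a dense G_δ subset of Sub(Γ) with respect to the Chabauty topology. -/
/-- The conjugation action of `γ` on subgroups: `Δ ↦ γ Δ γ⁻¹`. -/
def conjSubgroup {Γ : Type*} [Group Γ] (γ : Γ) (Δ : Subgroup Γ) : Subgroup Γ :=
  Subgroup.map (MulAut.conj γ).toMonoidHom Δ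

/-- The Chabauty topology on `Subgroup Γ`: induced from the product of discrete
topologies on `Γ → Prop` via the membership indicator. -/
def chabautyTopology (Γ : Type*) [Group Γ] : TopologicalSpace (Subgroup Γ) :=
  TopologicalSpace.induced (fun (Δ : Subgroup Γ) (g : Γ) => g ∈ Δ)
    (@Pi.topologicalSpace Γ (fun _ => Prop) (fun _ => ⊥))

/-- `γ` is a recurrent direction for `Δ`: every Chabauty-open neighbourhood `O` of `Δ`
contains `γ^n Δ γ^{-n}` for some `n ≥ 1`. -/
def IsRecurrentDirection {Γ : Type*} [Group Γ] (γ : Γ) (Δ : Subgroup Γ) : Prop :=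
  ∀ O : Set (Subgroup Γ), (chabautyTopology Γ).IsOpen O → Δ ∈ O →
    ∃ n : ℕ, 1 ≤ n ∧ conjSubgroup (γ ^ n) Δ ∈ O

/-- `Δ` is a boomerang subgroup if every `γ` is a recurrent direction for it. -/
def IsBoomerang {Γ : Type*} [Group Γ] (Δ : Subgroup Γ) : Prop :=
  ∀ γ : Γ, IsRecurrentDirection γ Δ

/-!
For a countable family of continuous self-maps of a second countable space, the points that
return to each of their neighbourhoods form a residual set as soon as they are dense.
Conjugation by `γ ^ n` is continuous on `Sub(Γ)`, which is second countable for countable `Γ`.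
LERF makes the finite-index subgroups dense, and each of them contains some `γ ^ n` with
`n ≥ 1`, so it is fixed by conjugation by `γ ^ n`. Hence every direction `γ` is recurrent
for a residual set of subgroups, and there are countably many directions.
-/

open Topology Filter Set

attribute [local instance] chabautyTopology

section RecurrentPoints

variable {X ι : Type*} [TopologicalSpace X]

def IsRecurrentPt (T : ι → X → X) (x : X) : Prop :=
  ∀ O : Set X, IsOpen O → x ∈ O → ∃ i, T i x ∈ O

theorem IsRecurrentPt.of_apply_eq {T : ι → X → X} {x : X} {i : ι} (h : T i x = x) :
    IsRecurrentPt T x :=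
  fun _ _ hx => ⟨i, h.symm ▸ hx⟩

/-- For a basic open set `B`, the points outside `closure B` or returning to `B` form an open
set, dense because it contains the recurrent points of the dense open set `B ∪ (closure B)ᶜ`. -/
theorem residual_setOf_isRecurrentPt [SecondCountableTopology X] {T : ι → X → X}
    (hT : ∀ i, Continuous (T i)) (hdense : Dense {x | IsRecurrentPt T x}) :
    {x | IsRecurrentPt T x} ∈ residual X := by
  obtain ⟨b, hbc, -, hb⟩ := TopologicalSpace.exists_countable_basis X
  set W : Set X → Set X := fun B => (closure B)ᶜ ∪ ⋃ i, T i ⁻¹' B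
  have hW : ∀ B ∈ b, W B ∈ residual X := by
    intro B hB
    have hBo := hb.isOpen hB
    refine residual_of_dense_open
      (isClosed_closure.isOpen_compl.union (isOpen_iUnion fun i => hBo.preimage (hT i))) ?_
    refine (dense_coborder.inter_of_isOpen_left hdense hBo.isLocallyClosed.isOpen_coborder).mono ?_
    rintro x ⟨hx, hrec⟩
    rw [coborder_eq_union_closure_compl] at hx
    rcases hx with hxB | hxB
    · exact Or.inr (mem_iUnion.2 (hrec B hBo hxB))
    · exact Or.inl hxB
  refine mem_of_superset ((countable_bInter_mem hbc).2 hW) fun x hx O hO hxO => ?_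
  obtain ⟨B, hB, hxB, hBO⟩ := hb.exists_subset_of_mem_open hxO hO
  rcases mem_iInter₂.1 hx B hB with hxB' | hret
  · exact absurd (subset_closure hxB) hxB'
  · obtain ⟨i, hi⟩ := mem_iUnion.1 hret
    exact ⟨i, hBO hi⟩

end RecurrentPoints

theorem mem_conjSubgroup {Γ : Type*} [Group Γ] {g x : Γ} {Δ : Subgroup Γ} :
    x ∈ conjSubgroup g Δ ↔ g⁻¹ * x * g ∈ Δ := by
  simp only [conjSubgroup, Subgroup.mem_map_equiv, MulAut.conj_symm_apply]

def IsLERF (Γ : Type*) [Group Γ] : Prop :=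
  ∀ H : Subgroup Γ, H.FG → H = sInf {K : Subgroup Γ | H ≤ K ∧ K.FiniteIndex}

namespace IsLERF

variable {Γ : Type*} [Group Γ]

theorem exists_finiteIndex_notMem (hΓ : IsLERF Γ) {H : Subgroup Γ} (hH : H.FG) {x : Γ}
    (hx : x ∉ H) : ∃ K : Subgroup Γ, H ≤ K ∧ K.FiniteIndex ∧ x ∉ K := by
  rw [hΓ H hH, Subgroup.mem_sInf] at hx
  simpa [and_assoc] using hx

/-- Take the closure of `I ∩ Δ` and separate it from each point of `I \ Δ`. -/
theorem exists_finiteIndex_forall_mem_iff (hΓ : IsLERF Γ) (Δ : Subgroup Γ) (I : Finset Γ) :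
    ∃ K : Subgroup Γ, K.FiniteIndex ∧ ∀ x ∈ I, x ∈ K ↔ x ∈ Δ := by
  classical
  set H := Subgroup.closure (↑(I.filter (· ∈ Δ)) : Set Γ)
  have hHΔ : H ≤ Δ := (Subgroup.closure_le Δ).2 fun x hx => (Finset.mem_filter.1 hx).2
  have hsep : ∀ x : Γ, ∃ K : Subgroup Γ, H ≤ K ∧ K.FiniteIndex ∧ (x ∉ Δ → x ∉ K) := by
    intro x
    by_cases hx : x ∈ Δ
    · exact ⟨⊤, le_top, inferInstance, absurd hx⟩
    · obtain ⟨K, hHK, hK, hxK⟩ := hΓ.exists_finiteIndex_notMem ⟨_, rfl⟩ fun h => hx (hHΔ h)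
      exact ⟨K, hHK, hK, fun _ => hxK⟩
  choose K hHK hK hxK using hsep
  refine ⟨⨅ y ∈ I, K y, Subgroup.finiteIndex_iInf' K fun y _ => hK y, fun x hx => ?_⟩
  simp only [Subgroup.mem_iInf]
  refine ⟨fun h => by_contra fun hxΔ => hxK x hxΔ (h x hx), fun hxΔ y _ => hHK y ?_⟩
  exact Subgroup.subset_closure (Finset.mem_filter.2 ⟨hx, hxΔ⟩)

end IsLERF

namespace Chabauty

variable {Γ : Type*} [Group Γ]

-- The instance on `Prop` is the Sierpiński topology; the Chabauty topology uses the discrete one.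
local notation "discretePi" => @Pi.topologicalSpace Γ (fun _ => Prop) (fun _ => ⊥)

theorem isInducing_mem :
    @IsInducing (Subgroup Γ) (Γ → Prop) (chabautyTopology Γ) (discretePi)
      (fun Δ g => g ∈ Δ) :=
  @IsInducing.induced _ _ (discretePi) _

instance [Countable Γ] : SecondCountableTopology (Subgroup Γ) := by
  let _ : TopologicalSpace Prop := ⊥
  have : DiscreteTopology Prop := ⟨rfl⟩
  exact isInducing_mem.secondCountableTopology

theorem exists_finset_of_mem_nhds {V : Set (Subgroup Γ)} {Δ : Subgroup Γ} (hV : V ∈ 𝓝 Δ) :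
    ∃ I : Finset Γ, ∀ Δ' : Subgroup Γ, (∀ x ∈ I, x ∈ Δ' ↔ x ∈ Δ) → Δ' ∈ V := by
  let _ : TopologicalSpace Prop := ⊥
  have : DiscreteTopology Prop := ⟨rfl⟩
  rw [isInducing_mem.nhds_eq_comap, nhds_pi, mem_comap] at hV
  obtain ⟨t, ht, htV⟩ := hV
  obtain ⟨I, s, hs, hIs⟩ := mem_pi'.1 ht
  refine ⟨I, fun Δ' h => htV (hIs fun x hx => ?_)⟩
  simp only [nhds_discrete, mem_pure] at hs
  simpa only [h x hx] using hs x

theorem dense_setOf_finiteIndex (hΓ : IsLERF Γ) : Dense {K : Subgroup Γ | K.FiniteIndex} := by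
  refine fun Δ => mem_closure_iff_nhds.2 fun V hV => ?_
  obtain ⟨I, hI⟩ := exists_finset_of_mem_nhds hV
  obtain ⟨K, hK, hKI⟩ := hΓ.exists_finiteIndex_forall_mem_iff Δ I
  exact ⟨K, hI K hKI, hK⟩

theorem continuous_conjSubgroup (g : Γ) : Continuous (conjSubgroup g) := by
  let _ : TopologicalSpace Prop := ⊥
  refine isInducing_mem.continuous_iff.2 (continuous_pi fun x => ?_)
  simp only [Function.comp_def, mem_conjSubgroup]
  exact (continuous_apply _).comp isInducing_mem.continuous

theorem isRecurrentDirection_iff {γ : Γ} {Δ : Subgroup Γ} :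
    IsRecurrentDirection γ Δ ↔ IsRecurrentPt (fun n : ℕ+ => conjSubgroup (γ ^ (n : ℕ))) Δ :=
  forall₃_congr fun _ _ _ =>
    ⟨fun ⟨n, hn, h⟩ => ⟨⟨n, hn⟩, h⟩, fun ⟨n, h⟩ => ⟨n, n.pos, h⟩⟩

theorem _root_.Subgroup.FiniteIndex.isRecurrentDirection {K : Subgroup Γ} (hK : K.FiniteIndex)
    (γ : Γ) : IsRecurrentDirection γ K := by
  obtain ⟨n, hn, -, hγn⟩ := Subgroup.exists_pow_mem_of_index_ne_zero hK.index_ne_zero γ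
  exact isRecurrentDirection_iff.2 <|
    IsRecurrentPt.of_apply_eq (i := ⟨n, hn⟩) (Subgroup.conj_smul_eq_self_of_mem hγn)

end Chabauty

open Chabauty in
theorem boomerang_residual_of_lerf {Γ : Type*} [Group Γ] [Countable Γ]
    (hLERF : ∀ H : Subgroup Γ, H.FG →
      H = sInf {K : Subgroup Γ | H ≤ K ∧ K.FiniteIndex}) :
    {Δ : Subgroup Γ | IsBoomerang Δ} ∈ @residual (Subgroup Γ) (chabautyTopology Γ) := by
  have hrec (γ : Γ) : {Δ | IsRecurrentDirection γ Δ} ∈ residual (Subgroup Γ) := by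
    simp only [isRecurrentDirection_iff]
    exact residual_setOf_isRecurrentPt (fun _ => continuous_conjSubgroup _)
      ((dense_setOf_finiteIndex hLERF).mono fun K hK =>
        isRecurrentDirection_iff.1 (hK.isRecurrentDirection γ))
  simpa only [IsBoomerang, ofPred_forall] using countable_iInter_mem.2 hrec
end

section
/- Let n ≥ 3 and let Δ be a boomerang subgroup of SL_n(ℤ). Suppose there exist indices i ≠ j and a nonzero integer r with e_{i,j}^r ∈ Δ, where e_{i,j}^r = I + r·E_{i,j}. Then for every pair of indices i' ≠ j' there exists a nonzero integer r' with e_{i',j'}^{r'} ∈ Δ. -/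
open scoped commutatorElement

theorem chabautyTopology_isOpen_setOf_mem {Γ : Type*} [Group Γ] (g : Γ) :
    (chabautyTopology Γ).IsOpen {H : Subgroup Γ | g ∈ H} := by
  -- the Chabauty topology uses the discrete topology on `Prop`, not Mathlib's Sierpiński one
  let : TopologicalSpace Prop := ⊥
  have : DiscreteTopology Prop := ⟨rfl⟩
  exact ⟨(fun p : Γ → Prop => p g) ⁻¹' {q | q},
    (continuous_apply g).isOpen_preimage _ (isOpen_discrete _), rfl⟩

theorem IsBoomerang.exists_commutatorElement_mem {Γ : Type*} [Group Γ] {Δ : Subgroup Γ}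
    (hΔ : IsBoomerang Δ) (γ : Γ) {δ : Γ} (hδ : δ ∈ Δ) :
    ∃ m : ℕ, 1 ≤ m ∧ ⁅δ, γ ^ m⁆ ∈ Δ := by
  -- recurrence along `γ⁻¹` puts `γ ^ m * δ⁻¹ * γ⁻¹ ^ m` in `Δ`; multiply by `δ` on the left
  obtain ⟨m, hm, hconj⟩ :=
    hΔ γ⁻¹ _ (chabautyTopology_isOpen_setOf_mem δ⁻¹) (Δ.inv_mem hδ)
  refine ⟨m, hm, ?_⟩
  rw [Set.mem_ofPred_eq, conjSubgroup, Subgroup.mem_map_equiv, MulAut.conj_symm_apply,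
    inv_pow, inv_inv] at hconj
  simpa [commutatorElement_def, mul_assoc] using Δ.mul_mem hδ hconj

namespace Matrix.SpecialLinearGroup

variable {ι R : Type*} [Fintype ι] [DecidableEq ι] [CommRing R]

theorem transvection_pow {i j : ι} (hij : i ≠ j) (b : R) (m : ℕ) :
    transvection hij b ^ m = transvection hij (m * b) := by
  induction m with
  | zero => simp
  | succ m ih => rw [pow_succ, ih, ← transvection_add]; push_cast; ring_nf

theorem commutatorElement_transvection_transvection {i j k : ι} (hij : i ≠ j) (hjk : j ≠ k)
    (hik : i ≠ k) (a b : R) :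
    ⁅transvection hij a, transvection hjk b⁆ = transvection hik (a * b) := by
  rw [commutatorElement_def, transvection_inv, transvection_inv]
  refine Subtype.ext ?_
  simp only [coe_mul, transvection_coe, mul_add, add_mul, one_mul, mul_one,
    single_mul_single_same, single_mul_single_of_ne _ _ _ _ hij.symm,
    single_mul_single_of_ne _ _ _ _ hjk.symm, single_mul_single_of_ne _ _ _ _ hik.symm,
    zero_mul, mul_neg, neg_mul, ← single_neg]
  abel

theorem commutatorElement_transvection_transvection_left {i j k : ι} (hij : i ≠ j)
    (hki : k ≠ i) (hkj : k ≠ j) (a b : R) :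
    ⁅transvection hij a, transvection hki b⁆ = transvection hkj (-(b * a)) := by
  rw [← commutatorElement_inv, commutatorElement_transvection_transvection hki hij hkj,
    transvection_inv]

def ContainsTransvection (Δ : Subgroup (SpecialLinearGroup ι R)) (i j : ι) : Prop :=
  ∃ (hij : i ≠ j) (b : R), b ≠ 0 ∧ transvection hij b ∈ Δ

end Matrix.SpecialLinearGroup

open Matrix.SpecialLinearGroup

section Propagation

variable {ι R : Type*} [Fintype ι] [DecidableEq ι] [CommRing R] [NoZeroDivisors R] [CharZero R]
  {Δ : Subgroup (Matrix.SpecialLinearGroup ι R)} {i j k : ι}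

theorem IsBoomerang.containsTransvection_col (hΔ : IsBoomerang Δ)
    (h : ContainsTransvection Δ i j) (hik : i ≠ k) : ContainsTransvection Δ i k := by
  obtain ⟨hij, a, ha, hmem⟩ := h
  rcases eq_or_ne j k with rfl | hjk
  · exact ⟨hik, a, ha, hmem⟩
  obtain ⟨m, hm, hcomm⟩ := hΔ.exists_commutatorElement_mem (transvection hjk 1) hmem
  rw [transvection_pow, commutatorElement_transvection_transvection hij hjk hik] at hcomm
  exact ⟨hik, _, mul_ne_zero ha (by simpa using Nat.one_le_iff_ne_zero.mp hm), hcomm⟩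

theorem IsBoomerang.containsTransvection_row (hΔ : IsBoomerang Δ)
    (h : ContainsTransvection Δ i j) (hkj : k ≠ j) : ContainsTransvection Δ k j := by
  obtain ⟨hij, a, ha, hmem⟩ := h
  rcases eq_or_ne k i with rfl | hki
  · exact ⟨hkj, a, ha, hmem⟩
  obtain ⟨m, hm, hcomm⟩ := hΔ.exists_commutatorElement_mem (transvection hki 1) hmem
  rw [transvection_pow, commutatorElement_transvection_transvection_left hij hki hkj] at hcomm
  refine ⟨hkj, _, neg_ne_zero.mpr (mul_ne_zero ?_ ha), hcomm⟩
  simpa using Nat.one_le_iff_ne_zero.mp hm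

theorem IsBoomerang.containsTransvection (hΔ : IsBoomerang Δ) (hι : 3 ≤ Fintype.card ι)
    {i' j' : ι} (h : ContainsTransvection Δ i j) (hij' : i' ≠ j') :
    ContainsTransvection Δ i' j' := by
  rcases ne_or_eq j' i with hj'i | rfl
  · exact hΔ.containsTransvection_row (hΔ.containsTransvection_col h hj'i.symm) hij'
  rcases ne_or_eq i' j with hi'j | rfl
  · exact hΔ.containsTransvection_col (hΔ.containsTransvection_row h hi'j) hij'
  -- the transpose position is reached through a third index
  obtain ⟨k, hkj', hki'⟩ := ENat.exists_ne_ne_of_three_le (by simpa using hι) j' i'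
  exact hΔ.containsTransvection_col
    (hΔ.containsTransvection_row (hΔ.containsTransvection_col h hkj'.symm) hki'.symm) hij'

end Propagation

theorem boomerang_propagates_elementary {n : ℕ} (hn : 3 ≤ n)
    (Δ : Subgroup (Matrix.SpecialLinearGroup (Fin n) ℤ)) (hΔ : IsBoomerang Δ)
    (i j : Fin n) (hij : i ≠ j) (r : ℤ) (hr : r ≠ 0)
    (hmem : ∃ δ ∈ Δ, (δ : Matrix (Fin n) (Fin n) ℤ) = 1 + Matrix.single i j r) :
    ∀ i' j' : Fin n, i' ≠ j' → ∃ r' : ℤ, r' ≠ 0 ∧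
      ∃ δ ∈ Δ, (δ : Matrix (Fin n) (Fin n) ℤ) = 1 + Matrix.single i' j' r' := by
  intro i' j' hij'
  obtain ⟨δ, hδ, hδ_eq⟩ := hmem
  obtain ⟨_, r', hr', hmem'⟩ := hΔ.containsTransvection (by simpa using hn)
    ⟨hij, r, hr, (Subtype.ext hδ_eq : δ = transvection hij r) ▸ hδ⟩ hij'
  exact ⟨r', hr', _, hmem', transvection_coe hij' r'⟩
end
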